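/- arXiv:1801.04965 — 5 statements merged into one kernel-verified Lean document; each statement's English description precedes it below -/
import Mathlib

section
/- If G is a graph and H is obtained from G by subdividing some edges of G (replacing an edge uv by a new vertex w with edges uw and wv), then the domination number of H is at least the domination number of G. -/
/-- `D` is a dominating set of `G`: every vertex not in `D` has a neighbor in `D`. -/
def isDomSet {V : Type*} (G : SimpleGraph V) (D : Finset V) : Prop :=
  ∀ v, v ∉ D → ∃ u ∈ D, G.Adj u v

/-- The domination number: minimum cardinality of a dominating set. -/
noncomputable def domNum {V : Type*} (G : SimpleGraph V) : ℕ :=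
  sInf {n | ∃ D : Finset V, D.card = n ∧ isDomSet G D}

/-- The `(u,v)`-path-addition graph `G_{u,v,k}`: add an internally disjoint path with
`k` internal vertices between `u` and `v`. -/
noncomputable def pathAdd {V : Type*} (G : SimpleGraph V) (u v : V) (k : ℕ) :
    SimpleGraph (V ⊕ Fin k) :=
  SimpleGraph.fromRel (fun a b =>
    match a, b with
    | Sum.inl x, Sum.inl y => G.Adj x y
    | Sum.inl x, Sum.inr i => (x = u ∧ (i : ℕ) = 0) ∨ (x = v ∧ (i : ℕ) = k - 1)
    | Sum.inr _, Sum.inl _ => False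
    | Sum.inr i, Sum.inr j => (j : ℕ) = (i : ℕ) + 1)

/-- The graph obtained from `G` by subdividing the edges in `s`: each edge `e ∈ s`
is replaced by a new vertex joined to both endpoints of `e`. -/
noncomputable def subdivide {V : Type*} (G : SimpleGraph V) (s : Finset (Sym2 V)) :
    SimpleGraph (V ⊕ {e : Sym2 V // e ∈ s}) :=
  SimpleGraph.fromRel (fun a b =>
    match a, b with
    | Sum.inl x, Sum.inl y => G.Adj x y ∧ s(x, y) ∉ s
    | Sum.inl x, Sum.inr e => x ∈ e.1
    | _, _ => False)

theorem stmt0 {V : Type*} [Fintype V] (G : SimpleGraph V) (s : Finset (Sym2 V))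
    (hs : ↑s ⊆ G.edgeSet) :
    domNum G ≤ domNum (subdivide G s) := by
  classical
  -- the defining set for the subdivision is nonempty (take all vertices)
  have hne : {n | ∃ D : Finset (V ⊕ {e : Sym2 V // e ∈ s}), D.card = n ∧
      isDomSet (subdivide G s) D}.Nonempty := by
    exact ⟨_, Finset.univ, rfl, fun v hv => absurd (Finset.mem_univ v) hv⟩
  obtain ⟨D, hcard, hdom⟩ := Nat.sInf_mem hne
  -- map each vertex to `V`
  set f : (V ⊕ {e : Sym2 V // e ∈ s}) → V := fun a =>
    match a with
    | Sum.inl x => x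
    | Sum.inr e => e.1.out.1 with hf
  refine le_trans (Nat.sInf_le ⟨D.image f, rfl, ?_⟩) ?_
  · intro v hv
    have hvD : Sum.inl v ∉ D := fun h => hv (Finset.mem_image.2 ⟨_, h, rfl⟩)
    obtain ⟨u, huD, hadj⟩ := hdom (Sum.inl v) hvD
    match u with
    | Sum.inl x =>
      refine ⟨x, Finset.mem_image.2 ⟨_, huD, rfl⟩, ?_⟩
      rcases hadj.2 with ⟨h, -⟩ | ⟨h, -⟩
      · exact h
      · exact h.symm
    | Sum.inr e =>
      have hve : v ∈ e.1 := by
        rcases hadj.2 with h | h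
        · exact h.elim
        · exact h
      set w := e.1.out.1 with hw
      have hwe : w ∈ e.1 := Sym2.out_fst_mem e.1
      have hwD : w ∈ D.image f := Finset.mem_image.2 ⟨_, huD, rfl⟩
      have hwv : w ≠ v := fun h => hv (h ▸ hwD)
      refine ⟨w, hwD, ?_⟩
      have : e.1 = s(w, v) := (Sym2.mem_and_mem_iff hwv).1 ⟨hwe, hve⟩
      have hedge : e.1 ∈ G.edgeSet := hs e.2
      rw [this] at hedge
      exact hedge
  · rw [domNum, ← hcard]; exact Finset.card_image_le
end

section
/- If v is a vertex of a graph G belonging to no minimum dominating set of G (a γ-bad vertex), then γ(G − v) = γ(G). -/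
lemma domNum_mem {V : Type*} [Fintype V] (G : SimpleGraph V) :
    ∃ D : Finset V, D.card = domNum G ∧ isDomSet G D := by
  have hne : {n | ∃ D : Finset V, D.card = n ∧ isDomSet G D}.Nonempty :=
    ⟨(Finset.univ : Finset V).card, Finset.univ, rfl,
      fun w hw => absurd (Finset.mem_univ w) hw⟩
  exact Nat.sInf_mem hne

lemma domNum_le {V : Type*} (G : SimpleGraph V) (D : Finset V) (hD : isDomSet G D) :
    domNum G ≤ D.card :=
  Nat.sInf_le ⟨D, rfl, hD⟩

theorem stmt2 {V : Type*} [Fintype V] (G : SimpleGraph V) (v : V)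
    (hbad : ∀ D : Finset V, isDomSet G D → D.card = domNum G → v ∉ D) :
    domNum (G.induce {w | w ≠ v}) = domNum G := by
  classical
  haveI : Fintype ↥{w : V | w ≠ v} := Fintype.ofFinite _
  -- ≤ direction
  obtain ⟨D, hDcard, hDdom⟩ := domNum_mem G
  have hvD : v ∉ D := hbad D hDdom hDcard
  set D' : Finset ↥{w : V | w ≠ v} := D.subtype (fun w => w ∈ {w : V | w ≠ v}) with hD'
  have hD'dom : isDomSet (G.induce {w | w ≠ v}) D' := by
    intro a ha
    have haD : (a : V) ∉ D := by
      intro h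
      exact ha (Finset.mem_subtype.2 h)
    obtain ⟨u, huD, huadj⟩ := hDdom a haD
    have huv : u ≠ v := fun h => hvD (h ▸ huD)
    exact ⟨⟨u, huv⟩, Finset.mem_subtype.2 huD, huadj⟩
  have hD'card : D'.card = D.card := by
    rw [hD', Finset.card_subtype]
    congr 1
    apply Finset.filter_true_of_mem
    intro x hx
    exact fun h => hvD (h ▸ hx)
  have hle : domNum (G.induce {w | w ≠ v}) ≤ domNum G := by
    calc domNum (G.induce {w | w ≠ v}) ≤ D'.card := domNum_le _ _ hD'dom
    _ = domNum G := by rw [hD'card, hDcard]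
  -- ≥ direction
  obtain ⟨E', hE'card, hE'dom⟩ := domNum_mem (G.induce {w | w ≠ v})
  set ι : ↥{w : V | w ≠ v} ↪ V := ⟨Subtype.val, Subtype.val_injective⟩ with hι
  set E : Finset V := insert v (E'.map ι) with hE
  have hvnot : v ∉ E'.map ι := by
    intro h
    obtain ⟨a, _, ha⟩ := Finset.mem_map.1 h
    exact a.2 ha
  have hEcard : E.card = E'.card + 1 := by
    rw [hE, Finset.card_insert_of_notMem hvnot, Finset.card_map]
  have hEdom : isDomSet G E := by
    intro w hw
    have hwv : w ≠ v := by
      intro h; exact hw (h ▸ Finset.mem_insert_self v _)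
    have hwE' : (⟨w, hwv⟩ : ↥{w : V | w ≠ v}) ∉ E' := by
      intro h
      exact hw (Finset.mem_insert_of_mem (Finset.mem_map_of_mem ι h))
    obtain ⟨u, huE', huadj⟩ := hE'dom ⟨w, hwv⟩ hwE'
    exact ⟨(u : V), Finset.mem_insert_of_mem (Finset.mem_map_of_mem ι huE'), huadj⟩
  have hge : domNum G ≤ E.card := domNum_le G E hEdom
  rw [hEcard, hE'card] at hge
  rcases lt_or_eq_of_le hge with h | h
  · omega
  · exact absurd (Finset.mem_insert_self v _) (hbad E hEdom (by rw [hEcard, hE'card, ← h]))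
end

section
/- If v is a vertex of a graph G with γ(G − v) < γ(G) (a γ-critical vertex), then every neighbor of v belongs to no minimum dominating set of G − v. -/
theorem stmt4 {V : Type*} [Fintype V] (G : SimpleGraph V) (v : V)
    (hcrit : domNum (G.induce {w | w ≠ v}) < domNum G) :
    ∀ (w : V) (hw : w ≠ v), G.Adj v w →
      ∀ D : Finset {x : V // x ∈ {x | x ≠ v}},
        isDomSet (G.induce {x | x ≠ v}) D →
        D.card = domNum (G.induce {x | x ≠ v}) → ⟨w, hw⟩ ∉ D := by
  intro w hw hadj D hdom hcard hwD
  -- lift D to a dominating set of G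
  set D' : Finset V := D.map ⟨Subtype.val, Subtype.val_injective⟩ with hD'
  have hdom' : isDomSet G D' := by
    intro x hx
    by_cases hxv : x = v
    · refine ⟨w, ?_, ?_⟩
      · simp only [hD', Finset.mem_map]
        exact ⟨⟨w, hw⟩, hwD, rfl⟩
      · subst hxv; exact hadj.symm
    · have hxD : (⟨x, hxv⟩ : {x : V // x ∈ {x | x ≠ v}}) ∉ D := by
        intro h
        exact hx (by simp only [hD', Finset.mem_map]; exact ⟨⟨x, hxv⟩, h, rfl⟩)
      obtain ⟨u, huD, hu⟩ := hdom _ hxD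
      exact ⟨u.1, by simp only [hD', Finset.mem_map]; exact ⟨u, huD, rfl⟩, hu⟩
  have hle : domNum G ≤ D'.card := Nat.sInf_le ⟨D', rfl, hdom'⟩
  have : D'.card = D.card := Finset.card_map _
  omega
end

section
/- Let u and v be adjacent vertices of a graph G and let G_{u,v,1} be obtained by adding a new vertex x adjacent exactly to u and v. Then γ(G) ≤ γ(G_{u,v,1}) ≤ γ(G) + 1, and γ(G_{u,v,1}) = γ(G) if and only if at least one of u, v belongs to some minimum dominating set of G. -/
open Finset Sum

lemma isDomSet_univ {V : Type*} [Fintype V] (G : SimpleGraph V) : isDomSet G univ :=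
  fun w hw => absurd (mem_univ w) hw

lemma domNum_le_card {V : Type*} {G : SimpleGraph V} {D : Finset V} (hD : isDomSet G D) :
    domNum G ≤ #D :=
  Nat.sInf_le ⟨D, rfl, hD⟩

lemma exists_isDomSet_card_eq_domNum {V : Type*} [Fintype V] (G : SimpleGraph V) :
    ∃ D : Finset V, #D = domNum G ∧ isDomSet G D :=
  Nat.sInf_mem (s := {n | ∃ D : Finset V, #D = n ∧ isDomSet G D})
    ⟨_, univ, rfl, isDomSet_univ G⟩

section pathAdd

variable {V : Type*} {G : SimpleGraph V} {u v : V}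

lemma pathAdd_adj_inl_inl {k : ℕ} {a b : V} :
    (pathAdd G u v k).Adj (inl a) (inl b) ↔ G.Adj a b := by
  simp only [pathAdd, SimpleGraph.fromRel_adj, ne_eq, inl.injEq]
  exact ⟨fun ⟨_, h⟩ => h.elim id G.adj_symm, fun h => ⟨h.ne, Or.inl h⟩⟩

lemma pathAdd_one_adj_inl_inr {a : V} {i : Fin 1} :
    (pathAdd G u v 1).Adj (inl a) (inr i) ↔ a = u ∨ a = v := by
  simp [pathAdd, SimpleGraph.fromRel_adj]

lemma isDomSet_pathAdd_one_disjSum {D : Finset V} {T : Finset (Fin 1)} (hD : isDomSet G D)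
    (hT : T.Nonempty ∨ u ∈ D ∨ v ∈ D) : isDomSet (pathAdd G u v 1) (D.disjSum T) := by
  rintro (a | i) ha
  · obtain ⟨b, hb, hba⟩ := hD a (by simpa using ha)
    exact ⟨inl b, inl_mem_disjSum.2 hb, pathAdd_adj_inl_inl.2 hba⟩
  · rcases hT with ⟨j, hj⟩ | hu | hv
    · exact absurd (inr_mem_disjSum.2 (Subsingleton.elim j i ▸ hj)) ha
    · exact ⟨inl u, inl_mem_disjSum.2 hu, pathAdd_one_adj_inl_inr.2 (Or.inl rfl)⟩
    · exact ⟨inl v, inl_mem_disjSum.2 hv, pathAdd_one_adj_inl_inr.2 (Or.inr rfl)⟩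

/-- The new vertex `x` is replaced by `u`; then only `v` can lose its dominator, and `u ~ v`. -/
lemma exists_isDomSet_card_le_of_isDomSet_pathAdd_one (h : G.Adj u v)
    {D : Finset (V ⊕ Fin 1)} (hD : isDomSet (pathAdd G u v 1) D) :
    ∃ D' : Finset V, isDomSet G D' ∧ #D' ≤ #D ∧ (u ∈ D' ∨ v ∈ D') := by
  classical
  set D' := D.toLeft ∪ D.toRight.image fun _ => u
  have hu : inr 0 ∈ D → u ∈ D' := fun hx =>
    mem_union_right _ (mem_image_of_mem _ (mem_toRight.2 hx))
  refine ⟨D', ?_, ?_, ?_⟩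
  · intro w hw
    obtain ⟨a | i, ha, haw⟩ := hD (inl w) fun hwD => hw (mem_union_left _ (mem_toLeft.2 hwD))
    · exact ⟨a, mem_union_left _ (mem_toLeft.2 ha), pathAdd_adj_inl_inl.1 haw⟩
    · have hx : inr 0 ∈ D := Fin.fin_one_eq_zero i ▸ ha
      rcases pathAdd_one_adj_inl_inr.1 haw.symm with rfl | rfl
      · exact absurd (hu hx) hw
      · exact ⟨u, hu hx, h⟩
  · calc #D' ≤ #D.toLeft + #(D.toRight.image fun _ => u) := card_union_le _ _
      _ ≤ #D.toLeft + #D.toRight := Nat.add_le_add_left card_image_le _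
      _ = #D := card_toLeft_add_card_toRight
  · by_cases hx : inr 0 ∈ D
    · exact Or.inl (hu hx)
    obtain ⟨a | i, ha, hax⟩ := hD (inr 0) hx
    · rcases pathAdd_one_adj_inl_inr.1 hax with rfl | rfl
      · exact Or.inl (mem_union_left _ (mem_toLeft.2 ha))
      · exact Or.inr (mem_union_left _ (mem_toLeft.2 ha))
    · exact absurd (Fin.fin_one_eq_zero i ▸ ha) hx

end pathAdd

theorem stmt6 {V : Type*} [Fintype V] (G : SimpleGraph V) (u v : V) (h : G.Adj u v) :
    domNum G ≤ domNum (pathAdd G u v 1) ∧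
    domNum (pathAdd G u v 1) ≤ domNum G + 1 ∧
    (domNum (pathAdd G u v 1) = domNum G ↔
      ∃ D : Finset V, isDomSet G D ∧ D.card = domNum G ∧ (u ∈ D ∨ v ∈ D)) := by
  obtain ⟨D, hDcard, hD⟩ := exists_isDomSet_card_eq_domNum G
  obtain ⟨E, hEcard, hE⟩ := exists_isDomSet_card_eq_domNum (pathAdd G u v 1)
  obtain ⟨E', hE', hE'card, huv⟩ := exists_isDomSet_card_le_of_isDomSet_pathAdd_one h hE
  have lower : domNum G ≤ domNum (pathAdd G u v 1) :=
    (domNum_le_card hE').trans (hEcard ▸ hE'card)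
  refine ⟨lower, ?_, fun heq => ⟨E', hE', ?_, huv⟩, ?_⟩
  · calc domNum (pathAdd G u v 1) ≤ #(D.disjSum univ) :=
          domNum_le_card (isDomSet_pathAdd_one_disjSum hD (Or.inl univ_nonempty))
      _ = domNum G + 1 := by rw [card_disjSum, hDcard, card_univ, Fintype.card_fin]
  · exact le_antisymm (hE'card.trans (hEcard.trans heq).le) (domNum_le_card hE')
  · rintro ⟨D, hD, hDcard, huv⟩
    refine le_antisymm ?_ lower
    calc domNum (pathAdd G u v 1) ≤ #(D.disjSum ∅) :=
          domNum_le_card (isDomSet_pathAdd_one_disjSum hD (Or.inr huv))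
      _ = domNum G := by rw [card_disjSum, card_empty, add_zero, hDcard]
end

section
/- If u and v are adjacent vertices of a graph G and G_{u,v,3} is obtained from G by adding a path u, x_1, x_2, x_3, v with three new internal vertices, then γ(G_{u,v,3}) = γ(G) + 1. -/
open Sum

section Aux

variable {V : Type*} {G : SimpleGraph V} {u v : V}

lemma adj_ll {x y : V} : (pathAdd G u v 3).Adj (inl x) (inl y) ↔ G.Adj x y := by
  simp only [pathAdd, SimpleGraph.fromRel_adj]
  constructor
  · rintro ⟨-, hc | hc⟩
    · exact hc
    · exact hc.symm
  · intro hx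
    exact ⟨by simp [hx.ne], Or.inl hx⟩

lemma adj_lr {x : V} {i : Fin 3} : (pathAdd G u v 3).Adj (inl x) (inr i) ↔
    (x = u ∧ (i : ℕ) = 0) ∨ (x = v ∧ (i : ℕ) = 2) := by
  simp [pathAdd, SimpleGraph.fromRel_adj]

lemma adj_rl {x : V} {i : Fin 3} : (pathAdd G u v 3).Adj (inr i) (inl x) ↔
    (x = u ∧ (i : ℕ) = 0) ∨ (x = v ∧ (i : ℕ) = 2) := by
  rw [SimpleGraph.adj_comm]; exact adj_lr

lemma adj_rr {i j : Fin 3} : (pathAdd G u v 3).Adj (inr i) (inr j) ↔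
    ((j : ℕ) = (i : ℕ) + 1 ∨ (i : ℕ) = (j : ℕ) + 1) := by
  simp only [pathAdd, SimpleGraph.fromRel_adj]
  constructor
  · rintro ⟨-, hc⟩; exact hc
  · intro hc
    refine ⟨?_, hc⟩
    intro heq
    rw [Sum.inr.injEq] at heq
    subst heq
    omega

lemma upper_bound (D : Finset V) (hD : isDomSet G D) :
    ∃ D' : Finset (V ⊕ Fin 3), D'.card = D.card + 1 ∧ isDomSet (pathAdd G u v 3) D' := by
  classical
  refine ⟨insert (inr 1) (D.image inl), ?_, ?_⟩
  · rw [Finset.card_insert_of_notMem (by simp), Finset.card_image_of_injective _ inl_injective]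
  · intro a ha
    match a with
    | inl w =>
      have hw : w ∉ D := fun hw => ha (Finset.mem_insert_of_mem (Finset.mem_image_of_mem _ hw))
      obtain ⟨y, hy, hadj⟩ := hD w hw
      exact ⟨inl y, Finset.mem_insert_of_mem (Finset.mem_image_of_mem _ hy), adj_ll.mpr hadj⟩
    | inr j =>
      refine ⟨inr 1, Finset.mem_insert_self _ _, adj_rr.mpr ?_⟩
      have hj : j ≠ 1 := fun hj => ha (by rw [hj]; exact Finset.mem_insert_self _ _)
      have hj' : (j : ℕ) ≠ 1 := fun hj' => hj (Fin.ext hj')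
      have := j.isLt
      omega

lemma lower_bound (h : G.Adj u v) (D' : Finset (V ⊕ Fin 3))
    (hD : isDomSet (pathAdd G u v 3) D') :
    ∃ D : Finset V, isDomSet G D ∧ D.card + 1 ≤ D'.card := by
  classical
  set A : Finset V := D'.toLeft with hA
  set B : Finset (Fin 3) := D'.toRight with hB
  have hcard : A.card + B.card = D'.card := Finset.card_toLeft_add_card_toRight
  have hmemA : ∀ w : V, w ∈ A ↔ inl w ∈ D' := fun w => Finset.mem_toLeft
  have hmemB : ∀ j : Fin 3, j ∈ B ↔ inr j ∈ D' := fun j => Finset.mem_toRight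
  -- a helper for dominated left vertices
  have helper : ∀ w : V, w ∉ A → (∃ y ∈ A, G.Adj y w) ∨
      (∃ j ∈ B, (w = u ∧ (j : ℕ) = 0) ∨ (w = v ∧ (j : ℕ) = 2)) := by
    intro w hw
    obtain ⟨a, ha, hadj⟩ := hD (inl w) (fun hc => hw ((hmemA w).mpr hc))
    match a with
    | inl y => exact Or.inl ⟨y, (hmemA y).mpr ha, adj_ll.mp hadj⟩
    | inr j => exact Or.inr ⟨j, (hmemB j).mpr ha, adj_rl.mp hadj⟩
  -- B is nonempty
  have hBne : B.Nonempty := by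
    by_cases h1 : inr (1 : Fin 3) ∈ D'
    · exact ⟨1, (hmemB 1).mpr h1⟩
    · obtain ⟨a, ha, hadj⟩ := hD (inr 1) h1
      match a with
      | inl y =>
        rcases adj_lr.mp hadj with ⟨-, hc⟩ | ⟨-, hc⟩ <;> simp at hc
      | inr j => exact ⟨j, (hmemB j).mpr ha⟩
  rcases Nat.lt_or_ge B.card 2 with hB2 | hB2
  · -- B.card = 1
    have hB1 : B.card = 1 := le_antisymm (by omega) (Finset.card_pos.mpr hBne)
    obtain ⟨i, hBi⟩ := Finset.card_eq_one.mp hB1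
    have memB : ∀ j : Fin 3, j ∈ B ↔ j = i := by
      intro j; rw [hBi, Finset.mem_singleton]
    -- i must be 0, 1 or 2; analyze
    have key : ∀ w : V, w ∉ A → (∃ y ∈ A, G.Adj y w) ∨
        ((w = u ∧ (i : ℕ) = 0) ∨ (w = v ∧ (i : ℕ) = 2)) := by
      intro w hw
      rcases helper w hw with hy | ⟨j, hj, hc⟩
      · exact Or.inl hy
      · rw [memB] at hj; subst hj; exact Or.inr hc
    refine ⟨A, ?_, by omega⟩
    fin_cases i
    · -- i = 0 : show v ∈ A
      have hvA : v ∈ A := by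
        have h2 : inr (2 : Fin 3) ∉ D' := by
          intro hc
          have := (memB 2).mp ((hmemB 2).mpr hc)
          simp at this
        obtain ⟨a, ha, hadj⟩ := hD (inr 2) h2
        match a with
        | inl y =>
          rcases adj_lr.mp hadj with ⟨-, hc⟩ | ⟨rfl, -⟩
          · simp at hc
          · exact (hmemA y).mpr ha
        | inr j =>
          exfalso
          have hj := (memB j).mp ((hmemB j).mpr ha)
          subst hj
          rcases adj_rr.mp hadj with hc | hc <;> simp at hc
      intro w hw
      rcases key w hw with ⟨y, hy, hadj⟩ | ⟨rfl, -⟩ | ⟨-, hc⟩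
      · exact ⟨y, hy, hadj⟩
      · exact ⟨v, hvA, h.symm⟩
      · simp at hc
    · -- i = 1
      intro w hw
      rcases key w hw with ⟨y, hy, hadj⟩ | ⟨-, hc⟩ | ⟨-, hc⟩
      · exact ⟨y, hy, hadj⟩
      · simp at hc
      · simp at hc
    · -- i = 2 : show u ∈ A
      have huA : u ∈ A := by
        have h0 : inr (0 : Fin 3) ∉ D' := by
          intro hc
          have := (memB 0).mp ((hmemB 0).mpr hc)
          simp at this
        obtain ⟨a, ha, hadj⟩ := hD (inr 0) h0
        match a with
        | inl y =>
          rcases adj_lr.mp hadj with ⟨rfl, -⟩ | ⟨-, hc⟩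
          · exact (hmemA y).mpr ha
          · simp at hc
        | inr j =>
          exfalso
          have hj := (memB j).mp ((hmemB j).mpr ha)
          subst hj
          rcases adj_rr.mp hadj with hc | hc <;> simp at hc
      intro w hw
      rcases key w hw with ⟨y, hy, hadj⟩ | ⟨-, hc⟩ | ⟨rfl, -⟩
      · exact ⟨y, hy, hadj⟩
      · simp at hc
      · exact ⟨u, huA, h⟩
  · -- B.card ≥ 2
    refine ⟨insert u A, ?_, ?_⟩
    · intro w hw
      have hwu : w ≠ u := fun hc => hw (hc ▸ Finset.mem_insert_self _ _)
      have hwA : w ∉ A := fun hc => hw (Finset.mem_insert_of_mem hc)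
      rcases helper w hwA with ⟨y, hy, hadj⟩ | ⟨j, hj, ⟨rfl, -⟩ | ⟨rfl, -⟩⟩
      · exact ⟨y, Finset.mem_insert_of_mem hy, hadj⟩
      · exact absurd rfl hwu
      · exact ⟨u, Finset.mem_insert_self _ _, h⟩
    · have := Finset.card_insert_le u A
      omega

lemma domSet_nonempty {W : Type*} [Fintype W] (H : SimpleGraph W) :
    {n | ∃ D : Finset W, D.card = n ∧ isDomSet H D}.Nonempty := by
  classical
  exact ⟨_, Finset.univ, rfl, fun w hw => absurd (Finset.mem_univ w) hw⟩

end Aux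

theorem stmt9 {V : Type*} [Fintype V] (G : SimpleGraph V) (u v : V) (h : G.Adj u v) :
    domNum (pathAdd G u v 3) = domNum G + 1 := by
  classical
  unfold domNum
  apply le_antisymm
  · obtain ⟨D, hDcard, hDdom⟩ := Nat.sInf_mem (domSet_nonempty G)
    obtain ⟨D', hD'card, hD'dom⟩ := upper_bound (u := u) (v := v) D hDdom
    exact Nat.sInf_le ⟨D', by rw [hD'card, hDcard], hD'dom⟩
  · obtain ⟨D', hD'card, hD'dom⟩ := Nat.sInf_mem (domSet_nonempty (pathAdd G u v 3))
    obtain ⟨D, hDdom, hDcard⟩ := lower_bound h D' hD'dom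
    have : sInf {n | ∃ D : Finset V, D.card = n ∧ isDomSet G D} ≤ D.card := Nat.sInf_le ⟨D, rfl, hDdom⟩
    omega
end
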